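/- Let G(U, V; E) be a bipartite graph with parts of size n containing a perfect matching M, with pairwise distinct prices p_1, …, p_n ∈ [1/e, 1] on V. Fix i, let M(v_i) ∈ U be the vertex matched to v_i under M, and let p be the price of the item matched to M(v_i) in the greedy-by-price process run on G with v_i deleted (with p = 1 if M(v_i) is unmatched in that run). If p_i < p, then v_i is matched in the greedy-by-price process on G. -/

import Mathlib

open scoped Classical

noncomputable section

/-- The element of `c` minimizing `key`, if `c` is nonempty. -/
def pickMin {n : ℕ} {α : Type*} [LinearOrder α] (key : Fin n → α)
    (c : Finset (Fin n)) : Option (Fin n) :=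
  if h : c.Nonempty then some (Classical.choose (Finset.exists_min_image c key h)) else none

/-- The set of matched `V`-vertices after the first `j` arrivals of the online greedy
process on the bipartite graph with `U`-side arrival order `u_0, u_1, …` and adjacency
`adj`, in which each arriving `u_j` is matched to its currently unmatched neighbor
minimizing `key` (if any). -/
def greedyRun {n : ℕ} {α : Type*} [LinearOrder α] (adj : ℕ → Fin n → Prop)
    (key : Fin n → α) : ℕ → Finset (Fin n)
  | 0 => ∅
  | j + 1 =>
    match pickMin key ((Finset.univ.filter fun i => adj j i) \ greedyRun adj key j) with
    | some v => insert v (greedyRun adj key j)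
    | none => greedyRun adj key j

/-- The `V`-vertex that the arriving vertex `u_j` (0-indexed) gets matched to, if any. -/
def greedyMatchU {n : ℕ} {α : Type*} [LinearOrder α] (adj : ℕ → Fin n → Prop)
    (key : Fin n → α) (j : ℕ) : Option (Fin n) :=
  pickMin key ((Finset.univ.filter fun i => adj j i) \ greedyRun adj key j)

/-- Adjacency of the monotone graph `MonotoneG` (0-indexed):
`u_j` is adjacent to `v_i` iff `j ≤ i`. -/
def monoAdj (n : ℕ) : ℕ → Fin n → Prop := fun j i => j ≤ (i : ℕ)

/-- The set of matched `V`-vertices produced by the Ranking greedy process on `MonotoneG`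
with permutation `π` (where `π i` is the rank of `v_i`, 0-indexed). -/
def rankMatched (n : ℕ) (π : Equiv.Perm (Fin n)) : Finset (Fin n) :=
  greedyRun (monoAdj n) (fun i => π i) n

/-- `x(π)`: the number of edges of the matching produced by Ranking on `MonotoneG`. -/
def xSize (n : ℕ) (π : Equiv.Perm (Fin n)) : ℕ := (rankMatched n π).card

/-- `a(n) = Σ_π x(π)`, over all `n!` permutations. -/
def aVal (n : ℕ) : ℕ := ∑ π : Equiv.Perm (Fin n), xSize n π

/-- `a(n,i)` (with `i` 1-indexed): the number of permutations `π` of `{1,…,n}` for which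
the vertex of rank `i` under `π` is matched by the Ranking greedy process on `MonotoneG`. -/
def aIdx (n i : ℕ) : ℕ :=
  (Finset.univ.filter fun π : Equiv.Perm (Fin n) =>
    ∃ v : Fin n, (π v : ℕ) = i - 1 ∧ v ∈ rankMatched n π).card

/-- `d(m,i)` (with `i` 1-indexed): the number of permutations of `{1,…,m}` all of whose
fixed points (if any) lie among the first `i` items. -/
def dIdx (m i : ℕ) : ℕ :=
  (Finset.univ.filter fun σ : Equiv.Perm (Fin m) => ∀ x, σ x = x → (x : ℕ) < i).card

/-- `d(m)`: the number of derangements of `{1,…,m}`. -/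
def numDer (m : ℕ) : ℕ :=
  (Finset.univ.filter fun σ : Equiv.Perm (Fin m) => ∀ x, σ x ≠ x).card

/-- The key for the greedy-by-price process: buy the cheapest available item,
breaking ties in favor of the smaller index. -/
def priceKey {n : ℕ} (p : Fin n → ℝ) : Fin n → Lex (ℝ × ℕ) := fun i => toLex (p i, (i : ℕ))

/-- The utility `y(u_j)` of buyer `u_j` (0-indexed) in the greedy-by-price process:
`1 - p v` if `u_j` buys item `v`, and `0` if `u_j` remains unmatched. -/
def utility (n : ℕ) (adj : ℕ → Fin n → Prop) (p : Fin n → ℝ) (j : ℕ) : ℝ :=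
  (greedyMatchU adj (priceKey p) j).elim 0 (fun v => 1 - p v)

/-- The revenue `r(v)` from item `v` in the greedy-by-price process:
`p v` if `v` is sold, and `0` otherwise. -/
def revenue (n : ℕ) (adj : ℕ → Fin n → Prop) (p : Fin n → ℝ) (v : Fin n) : ℝ :=
  if v ∈ greedyRun adj (priceKey p) n then p v else 0

/-- The `m`-th harmonic number `H_m = Σ_{i=1}^m 1/i` (with `H_0 = 0`). -/
def harm (m : ℕ) : ℝ := ∑ i ∈ Finset.range m, (1 : ℝ) / (i + 1)

/-! If `v_i` were never sold, deleting it would not change the greedy run, since nobody ever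
buys it. But `v_i` is still on sale when its partner `M(v_i)` arrives, so `M(v_i)` buys
some item at most as expensive as `v_i`, and by the same token buys that item in the run on
`G - v_i` as well; its price `q` is then at most `p i`. -/

section PickMin

variable {n : ℕ} {α : Type*} [LinearOrder α] {key : Fin n → α} {c : Finset (Fin n)}

lemma pickMin_spec {v : Fin n} (h : pickMin key c = some v) :
    v ∈ c ∧ ∀ w ∈ c, key v ≤ key w := by
  unfold pickMin at h
  split at h
  · cases h
    exact Classical.choose_spec (Finset.exists_min_image c key ‹_›)
  · cases h

lemma exists_pickMin_eq_some {i : Fin n} (hi : i ∈ c) :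
    ∃ v, pickMin key c = some v ∧ key v ≤ key i := by
  have hc : c.Nonempty := ⟨i, hi⟩
  obtain ⟨v, hv⟩ : ∃ v, pickMin key c = some v := by simp [pickMin, hc]
  exact ⟨v, hv, (pickMin_spec hv).2 i hi⟩

lemma pickMin_erase (hkey : Function.Injective key) {i : Fin n}
    (hi : pickMin key c ≠ some i) : pickMin key (c.erase i) = pickMin key c := by
  rcases hpick : pickMin key c with _ | v
  · have hc : ¬ c.Nonempty := by simpa [pickMin] using hpick
    have hc' : ¬ (c.erase i).Nonempty := fun ⟨w, hw⟩ => hc ⟨w, Finset.mem_of_mem_erase hw⟩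
    simp [pickMin, hc']
  · obtain ⟨hv, hmin⟩ := pickMin_spec hpick
    have hvi : v ≠ i := fun h => hi (h ▸ hpick)
    obtain ⟨u, hu, hle⟩ := exists_pickMin_eq_some (key := key) (Finset.mem_erase.2 ⟨hvi, hv⟩)
    have hu' := (pickMin_spec hu).1
    rw [hu, hkey (le_antisymm hle (hmin u (Finset.mem_of_mem_erase hu')))]

end PickMin

lemma priceKey_injective {n : ℕ} (p : Fin n → ℝ) : Function.Injective (priceKey p) :=
  fun _ _ h => Fin.ext (congrArg (fun x => (ofLex x).2) h)

lemma le_of_priceKey_le {n : ℕ} {p : Fin n → ℝ} {v w : Fin n}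
    (h : priceKey p v ≤ priceKey p w) : p v ≤ p w := by
  rcases Prod.Lex.le_iff.mp h with h | ⟨h, _⟩
  exacts [h.le, h.le]

section Greedy

variable {n : ℕ} {α : Type*} [LinearOrder α] (adj : ℕ → Fin n → Prop) (key : Fin n → α)

lemma greedyRun_succ (j : ℕ) :
    greedyRun adj key (j + 1) =
      (greedyMatchU adj key j).elim (greedyRun adj key j) (insert · (greedyRun adj key j)) := by
  rw [greedyRun, greedyMatchU]
  split <;> simp_all

lemma greedyRun_mono : Monotone (greedyRun adj key) := by
  refine monotone_nat_of_le_succ fun j => ?_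
  rw [greedyRun_succ]
  cases greedyMatchU adj key j
  exacts [le_rfl, Finset.subset_insert _ _]

variable {adj key}

lemma greedyMatchU_ne_some_of_not_mem {i : Fin n} {j : ℕ}
    (hi : i ∉ greedyRun adj key (j + 1)) : greedyMatchU adj key j ≠ some i := by
  intro h
  rw [greedyRun_succ, h] at hi
  exact hi (Finset.mem_insert_self _ _)

lemma exists_greedyMatchU_le {i : Fin n} {j : ℕ} (hadj : adj j i)
    (hi : i ∉ greedyRun adj key j) :
    ∃ v, greedyMatchU adj key j = some v ∧ key v ≤ key i :=
  exists_pickMin_eq_some (by simpa using ⟨hadj, hi⟩)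

lemma greedyMatchU_delete (hkey : Function.Injective key) {i : Fin n} {j : ℕ}
    (hrun : greedyRun (fun a b => adj a b ∧ b ≠ i) key j = greedyRun adj key j)
    (hi : greedyMatchU adj key j ≠ some i) :
    greedyMatchU (fun a b => adj a b ∧ b ≠ i) key j = greedyMatchU adj key j := by
  unfold greedyMatchU at hi ⊢
  rw [← pickMin_erase hkey hi]
  congr 1
  ext w
  simp only [hrun, Finset.mem_sdiff, Finset.mem_filter, Finset.mem_univ, true_and,
    Finset.mem_erase]
  tauto

lemma greedyRun_delete_of_not_mem (hkey : Function.Injective key) {i : Fin n} {N : ℕ}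
    (hi : i ∉ greedyRun adj key N) {j : ℕ} (hj : j ≤ N) :
    greedyRun (fun a b => adj a b ∧ b ≠ i) key j = greedyRun adj key j := by
  induction j with
  | zero => rfl
  | succ j ih =>
    have hij : greedyMatchU adj key j ≠ some i :=
      greedyMatchU_ne_some_of_not_mem fun h => hi (greedyRun_mono adj key hj h)
    rw [greedyRun_succ, greedyRun_succ, ih (by omega),
      greedyMatchU_delete hkey (ih (by omega)) hij]

end Greedy

theorem stmt_17_general (n : ℕ) (adj : ℕ → Fin n → Prop) (p : Fin n → ℝ)
    (M : Equiv.Perm (Fin n)) (hM : ∀ v : Fin n, adj ((M v : Fin n) : ℕ) v)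
    (i : Fin n) (q : ℝ)
    (hq : q = (greedyMatchU (fun a b => adj a b ∧ b ≠ i) (priceKey p)
      ((M i : Fin n) : ℕ)).elim 1 (fun w => p w))
    (hlt : p i < q) :
    i ∈ greedyRun adj (priceKey p) n := by
  by_contra hi
  have hj : ((M i : Fin n) : ℕ) < n := (M i).isLt
  obtain ⟨v, hv, hvi⟩ := exists_greedyMatchU_le (key := priceKey p) (hM i)
    fun h => hi (greedyRun_mono adj _ hj.le h)
  have hbuy : greedyMatchU adj (priceKey p) (M i) ≠ some i :=
    greedyMatchU_ne_some_of_not_mem fun h => hi (greedyRun_mono adj _ hj h)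
  have hsame := greedyMatchU_delete (priceKey_injective p)
    (greedyRun_delete_of_not_mem (priceKey_injective p) hi hj.le) hbuy
  rw [hsame, hv, Option.elim_some] at hq
  exact (le_of_priceKey_le hvi).not_gt (hq ▸ hlt)

/-- Let `G(U,V;E)` be a bipartite graph with parts of size `n` (vertex `u_j` of `U` is
0-indexed by the arrival step `j < n`) containing a perfect matching `M` (where `M v` is
the `U`-vertex matched to `v`), with pairwise distinct prices `p i ∈ [1/e, 1]` on `V`.
Fix `i`, and let `q` be the price of the item matched to `M(v_i)` in the greedy-by-price
process run on `G` with `v_i` deleted (with `q = 1` if `M(v_i)` is unmatched in that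
run). If `p i < q`, then `v_i` is matched in the greedy-by-price process on `G`. -/
theorem stmt_17 (n : ℕ) (adj : ℕ → Fin n → Prop) (p : Fin n → ℝ)
    (hp1 : ∀ i, 1 / Real.exp 1 ≤ p i ∧ p i ≤ 1) (hp2 : Function.Injective p)
    (M : Equiv.Perm (Fin n)) (hM : ∀ v : Fin n, adj ((M v : Fin n) : ℕ) v)
    (i : Fin n) (q : ℝ)
    (hq : q = (greedyMatchU (fun a b => adj a b ∧ b ≠ i) (priceKey p)
      ((M i : Fin n) : ℕ)).elim 1 (fun w => p w))
    (hlt : p i < q) :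
    i ∈ greedyRun adj (priceKey p) n :=
  stmt_17_general n adj p M hM i q hq hlt
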